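/- arXiv:math/0508018 — 2 statements merged into one kernel-verified Lean document; each statement's English description precedes it below -/
import Mathlib

section
/- For every squarefree positive integer d, the quadratic forms d·Q₁ and Q_d on ℚ²¹ are equivalent over ℚ; that is, there exists a ℚ-linear automorphism g of ℚ²¹ such that Q_d(g x) = d·Q₁(x) for all x ∈ ℚ²¹. -/
/-!
Write `d = a² + b² + c² + e²` (Lagrange). Both `d·Q₁` and `Q_d` split into two hyperbolic planes,
four copies of the quaternion norm form and one square. A hyperbolic plane is similar to itself
with any nonzero multiplier, left multiplication by the quaternion `a + bi + cj + ek` multiplies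
the norm form by `d` (Euler's four-square identity), and the last coordinate is left alone. This
gives a linear endomorphism `g` with `Q_d ∘ g = d·Q₁`; it is injective since `Q₁` is nondegenerate,
hence an automorphism.
-/

/-- The quadratic form `Q_d` on `ℚ²¹`:
`Q_d(x) = −x₁² − x₂² + x₃² + ⋯ + x₂₀² + d·x₂₁²` (indices shifted to `0,…,20`). -/
def Qd (d : ℚ) (x : Fin 21 → ℚ) : ℚ :=
  -(x 0 ^ 2) - x 1 ^ 2 +
    ∑ i ∈ Finset.univ.filter (fun i : Fin 21 => 2 ≤ i.val ∧ i.val ≤ 19), x i ^ 2 +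
    d * x 20 ^ 2

theorem sum_mul_sq_add_single {K ι : Type*} [Field K] [Fintype ι] [DecidableEq ι]
    (w x : ι → K) (i : ι) :
    ∑ j, w j * (x + Pi.single i 1 : ι → K) j ^ 2 = ∑ j, w j * x j ^ 2 + 2 * w i * x i + w i := by
  simp only [Pi.add_apply, add_sq, mul_add, Finset.sum_add_distrib, Pi.single_apply, mul_ite,
    ite_pow, one_pow, mul_one, mul_zero, ne_eq, OfNat.ofNat_ne_zero, not_false_eq_true, zero_pow,
    Finset.sum_ite_eq', Finset.mem_univ, if_true]
  ring

theorem injective_of_similitude_diagonal {K ι V : Type*} [Field K] [NeZero (2 : K)] [Fintype ι]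
    [DecidableEq ι] [AddCommGroup V] [Module K V] {w : ι → K} (hw : ∀ i, w i ≠ 0) (Q : V → K)
    {c : K} (hc : c ≠ 0) (g : (ι → K) →ₗ[K] V) (hg : ∀ x, Q (g x) = c * ∑ i, w i * x i ^ 2) :
    Function.Injective g := by
  refine (injective_iff_map_eq_zero g).2 fun x hx => funext fun i => ?_
  have hxy : ∀ y, ∑ j, w j * (x + y) j ^ 2 = ∑ j, w j * y j ^ 2 := fun y =>
    mul_left_cancel₀ hc <| by rw [← hg, ← hg, map_add, hx, zero_add]
  have hx0 : ∑ j, w j * x j ^ 2 = 0 := by simpa using hxy 0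
  have hsingle : ∑ j, w j * (Pi.single i 1 : ι → K) j ^ 2 = w i := by
    simpa using sum_mul_sq_add_single w 0 i
  have hxi := hxy (Pi.single i 1)
  rw [sum_mul_sq_add_single, hx0, hsingle] at hxi
  simpa [hw i, two_ne_zero] using hxi

theorem hyperbolic_scale {K : Type*} [Field K] [NeZero (2 : K)] (d x y : K) :
    (((d - 1) * x + (d + 1) * y) / 2) ^ 2 - (((d + 1) * x + (d - 1) * y) / 2) ^ 2 =
      d * (y ^ 2 - x ^ 2) := by
  field_simp
  ring

theorem Qd_apply (d : ℚ) (x : Fin 21 → ℚ) :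
    Qd d x = -x 0 ^ 2 - x 1 ^ 2 + x 2 ^ 2 + x 3 ^ 2 + x 4 ^ 2 + x 5 ^ 2 + x 6 ^ 2 + x 7 ^ 2 +
      x 8 ^ 2 + x 9 ^ 2 + x 10 ^ 2 + x 11 ^ 2 + x 12 ^ 2 + x 13 ^ 2 + x 14 ^ 2 + x 15 ^ 2 +
      x 16 ^ 2 + x 17 ^ 2 + x 18 ^ 2 + x 19 ^ 2 + d * x 20 ^ 2 := by
  simp +decide only [Qd, Finset.sum_filter, Fin.sum_univ_succ, Fin.sum_univ_zero, Fin.reduceSucc,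
    Fin.succ_zero_eq_one, Fin.succ_one_eq_two, ↓reduceIte]
  ring

theorem Qd_one_eq_sum (x : Fin 21 → ℚ) :
    Qd 1 x = ∑ i : Fin 21, (if i.val < 2 then -1 else 1) * x i ^ 2 := by
  rw [Qd_apply]
  simp +decide only [Fin.sum_univ_succ, Fin.sum_univ_zero, Fin.reduceSucc, Fin.succ_zero_eq_one,
    Fin.succ_one_eq_two, ↓reduceIte]
  ring

/-- The pairs `(x₀, x₂)` and `(x₁, x₃)` are hyperbolic planes, rescaled as in `hyperbolic_scale`;
the blocks `x₄ … x₇`, …, `x₁₆ … x₁₉` are quaternions, multiplied on the left by `a + bi + cj + ek`. -/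
def similitude (d a b c e : ℚ) : (Fin 21 → ℚ) →ₗ[ℚ] (Fin 21 → ℚ) where
  toFun x :=
    ![((d + 1) * x 0 + (d - 1) * x 2) / 2,
      ((d + 1) * x 1 + (d - 1) * x 3) / 2,
      ((d - 1) * x 0 + (d + 1) * x 2) / 2,
      ((d - 1) * x 1 + (d + 1) * x 3) / 2,
      a * x 4 - b * x 5 - c * x 6 - e * x 7,
      a * x 5 + b * x 4 + c * x 7 - e * x 6,
      a * x 6 - b * x 7 + c * x 4 + e * x 5,
      a * x 7 + b * x 6 - c * x 5 + e * x 4,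
      a * x 8 - b * x 9 - c * x 10 - e * x 11,
      a * x 9 + b * x 8 + c * x 11 - e * x 10,
      a * x 10 - b * x 11 + c * x 8 + e * x 9,
      a * x 11 + b * x 10 - c * x 9 + e * x 8,
      a * x 12 - b * x 13 - c * x 14 - e * x 15,
      a * x 13 + b * x 12 + c * x 15 - e * x 14,
      a * x 14 - b * x 15 + c * x 12 + e * x 13,
      a * x 15 + b * x 14 - c * x 13 + e * x 12,
      a * x 16 - b * x 17 - c * x 18 - e * x 19,
      a * x 17 + b * x 16 + c * x 19 - e * x 18,
      a * x 18 - b * x 19 + c * x 16 + e * x 17,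
      a * x 19 + b * x 18 - c * x 17 + e * x 16,
      x 20]
  map_add' x y := by
    ext i
    fin_cases i <;>
      simp only [Pi.add_apply, Fin.reduceFinMk, Fin.zero_eta, Fin.mk_one, Matrix.cons_val,
        Matrix.cons_val_zero, Matrix.cons_val_one] <;>
      ring
  map_smul' m x := by
    ext i
    fin_cases i <;>
      simp only [Pi.smul_apply, smul_eq_mul, RingHom.id_apply, Fin.reduceFinMk, Fin.zero_eta,
        Fin.mk_one, Matrix.cons_val, Matrix.cons_val_zero, Matrix.cons_val_one] <;>
      ring

theorem Qd_similitude {d a b c e : ℚ} (h : a ^ 2 + b ^ 2 + c ^ 2 + e ^ 2 = d)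
    (x : Fin 21 → ℚ) : Qd d (similitude d a b c e x) = d * Qd 1 x := by
  subst h
  simp only [similitude, LinearMap.coe_mk, AddHom.coe_mk, Qd_apply, Matrix.cons_val_zero,
    Matrix.cons_val_one, Matrix.cons_val, one_mul]
  linear_combination hyperbolic_scale (a ^ 2 + b ^ 2 + c ^ 2 + e ^ 2) (x 0) (x 2) +
    hyperbolic_scale (a ^ 2 + b ^ 2 + c ^ 2 + e ^ 2) (x 1) (x 3) +
    euler_four_squares a b c e (x 4) (x 5) (x 6) (x 7) +
    euler_four_squares a b c e (x 8) (x 9) (x 10) (x 11) +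
    euler_four_squares a b c e (x 12) (x 13) (x 14) (x 15) +
    euler_four_squares a b c e (x 16) (x 17) (x 18) (x 19)

theorem dQ1_equiv_Qd_general (d : ℕ) (hd : 0 < d) :
    ∃ g : (Fin 21 → ℚ) ≃ₗ[ℚ] (Fin 21 → ℚ),
      ∀ x : Fin 21 → ℚ, Qd d (g x) = d * Qd 1 x := by
  obtain ⟨a, b, c, e, h⟩ := Nat.sum_four_squares d
  have hsum : (a : ℚ) ^ 2 + (b : ℚ) ^ 2 + (c : ℚ) ^ 2 + (e : ℚ) ^ 2 = d := by exact_mod_cast h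
  have hinj : Function.Injective (similitude d a b c e) := by
    refine injective_of_similitude_diagonal ?_ (Qd d) (Nat.cast_ne_zero.2 hd.ne') _
      fun x => (Qd_similitude hsum x).trans (congrArg (_ * ·) (Qd_one_eq_sum x))
    intro i
    split_ifs <;> norm_num
  exact ⟨LinearEquiv.ofInjectiveEndo _ hinj, Qd_similitude hsum⟩

/-- For every squarefree positive integer `d`, the quadratic forms `d·Q₁` and `Q_d`
on `ℚ²¹` are equivalent over `ℚ`. -/
theorem dQ1_equiv_Qd (d : ℕ) (hd : 0 < d) (hsf : Squarefree d) :
    ∃ g : (Fin 21 → ℚ) ≃ₗ[ℚ] (Fin 21 → ℚ),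
      ∀ x : Fin 21 → ℚ, Qd d (g x) = d * Qd 1 x :=
  dQ1_equiv_Qd_general d hd
end

section
/- For every squarefree positive integer d, the groups SO(Q₁)(ℚ) and SO(Q_d)(ℚ) are isomorphic as groups. -/
/-- Endomorphisms of `ℚ²¹`. -/
abbrev End21 : Type := (Fin 21 → ℚ) →ₗ[ℚ] (Fin 21 → ℚ)

/-- `SO(Q_d)(ℚ)`: the group of `ℚ`-linear automorphisms of `ℚ²¹` of determinant `1`
preserving the quadratic form `Q_d`, as a subgroup of the general linear group. -/
def SOQ (d : ℚ) : Subgroup (LinearMap.GeneralLinearGroup ℚ (Fin 21 → ℚ)) where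
  carrier := {g | LinearMap.det (g.val : End21) = 1 ∧
      ∀ x : Fin 21 → ℚ, Qd d ((g.val : End21) x) = Qd d x}
  one_mem' := by
    refine ⟨by simp [Units.val_one], fun x => ?_⟩
    simp [Units.val_one]
  mul_mem' := by
    rintro a b ⟨ha1, ha2⟩ ⟨hb1, hb2⟩
    refine ⟨?_, fun x => ?_⟩
    · rw [Units.val_mul, map_mul, ha1, hb1, mul_one]
    · rw [Units.val_mul, Module.End.mul_apply, ha2, hb2]
  inv_mem' := by
    rintro a ⟨ha1, ha2⟩
    refine ⟨?_, fun x => ?_⟩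
    · have h : LinearMap.det ((a⁻¹.val : End21) * (a.val : End21)) = 1 := by
        rw [a.inv_mul]; exact map_one _
      rwa [map_mul, ha1, mul_one] at h
    · have hx : (a.val : End21) ((a⁻¹.val : End21) x) = x := by
        rw [← Module.End.mul_apply, a.mul_inv, Module.End.one_apply]
      calc Qd d ((a⁻¹.val : End21) x)
          = Qd d ((a.val : End21) ((a⁻¹.val : End21) x)) := (ha2 _).symm
        _ = Qd d x := by rw [hx]


/-!
Write `d = a² + b² + c² + e²` (Lagrange) and let `q = a + bi + cj + ek`, so that `normSq q = d`.
Left multiplication by `q` on each of the four quaternion blocks `x₅…x₈, …, x₁₇…x₂₀` multiplies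
their norms by `d` (the four-square identity `normSq (q * x) = normSq q * normSq x`), and each of
the hyperbolic planes `−x₁² + x₃²`, `−x₂² + x₄²` admits a similitude of ratio `d`. Together with
the identity on `x₂₁` this gives `A ∈ GL₂₁(ℚ)` with `Q_d ∘ A = d • Q₁`. Conjugation by a
similitude carries `SO(Q₁) = SO(d • Q₁)` onto `SO(Q_d)`.
-/

section Similitude

variable {K V : Type*} [Field K] [AddCommGroup V] [Module K V]

def specialIsometryGroup (Q : V → K) : Subgroup (LinearMap.GeneralLinearGroup K V) where
  carrier := {g | LinearMap.det (g : V →ₗ[K] V) = 1 ∧ ∀ x, Q ((g : V →ₗ[K] V) x) = Q x}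
  one_mem' := by simp
  mul_mem' := by
    rintro a b ⟨ha, ha'⟩ ⟨hb, hb'⟩
    exact ⟨by simp [ha, hb], fun x => by simp [ha', hb']⟩
  inv_mem' := by
    rintro a ⟨ha, ha'⟩
    refine ⟨by simp [ha], fun x => ?_⟩
    rw [← ha' ((a⁻¹ : LinearMap.GeneralLinearGroup K V).val x), ← Module.End.mul_apply,
      ← Units.val_mul, mul_inv_cancel, Units.val_one, Module.End.one_apply]

lemma mem_specialIsometryGroup {Q : V → K} {g : LinearMap.GeneralLinearGroup K V} :
    g ∈ specialIsometryGroup Q ↔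
      LinearMap.det (g : V →ₗ[K] V) = 1 ∧ ∀ x, Q ((g : V →ₗ[K] V) x) = Q x :=
  Iff.rfl

lemma specialIsometryGroup_smul {c : K} (hc : c ≠ 0) (Q : V → K) :
    specialIsometryGroup (c • Q) = specialIsometryGroup Q := by
  ext g
  simp [mem_specialIsometryGroup, hc]

lemma map_conj_specialIsometryGroup_comp (Q : V → K) (t : LinearMap.GeneralLinearGroup K V) :
    (specialIsometryGroup (Q ∘ t)).map (MulAut.conj t).toMonoidHom = specialIsometryGroup Q := by
  have hdet : LinearMap.det (t : V →ₗ[K] V) ≠ 0 := (LinearMap.isUnit_det _ t.isUnit).ne_zero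
  have hsurj : Function.Surjective (t : V →ₗ[K] V) := t.toLinearEquiv.surjective
  have hcancel (y : V) : (t : V →ₗ[K] V) ((t⁻¹ : LinearMap.GeneralLinearGroup K V).val y) = y := by
    rw [← Module.End.mul_apply, ← Units.val_mul, mul_inv_cancel, Units.val_one,
      Module.End.one_apply]
  ext g
  rw [Subgroup.mem_map_equiv, MulAut.conj_symm_apply, mem_specialIsometryGroup,
    mem_specialIsometryGroup]
  simp only [Function.comp_apply, Units.val_mul, map_mul, map_units_inv, Module.End.mul_apply,
    hcancel]
  exact and_congr (by rw [mul_comm, ← mul_assoc, mul_inv_cancel₀ hdet, one_mul])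
    (hsurj.forall (p := fun y => Q ((g : V →ₗ[K] V) y) = Q y)).symm

noncomputable def specialIsometryGroupEquivOfSimilar {Q Q' : V → K} {c : K} (hc : c ≠ 0)
    (t : LinearMap.GeneralLinearGroup K V) (ht : ∀ x, Q' ((t : V →ₗ[K] V) x) = c * Q x) :
    specialIsometryGroup Q ≃* specialIsometryGroup Q' :=
  have hQ : specialIsometryGroup Q = specialIsometryGroup (Q' ∘ t) := by
    rw [show Q' ∘ t = c • Q from funext ht, specialIsometryGroup_smul hc]
  (MulEquiv.subgroupCongr hQ).trans <| (MulEquiv.subgroupMap (MulAut.conj t) _).trans <|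
    MulEquiv.subgroupCongr (map_conj_specialIsometryGroup_comp Q' t)

end Similitude

open Quaternion

def quatBlock (i : Fin 21) : (Fin 21 → ℚ) →ₗ[ℚ] ℍ[ℚ] where
  toFun x := ⟨x i, x (i + 1), x (i + 2), x (i + 3)⟩
  map_add' _ _ := rfl
  map_smul' _ _ := rfl

section QuatBlock

variable (i : Fin 21) (x : Fin 21 → ℚ)

@[simp] lemma re_quatBlock : (quatBlock i x).re = x i := rfl
@[simp] lemma imI_quatBlock : (quatBlock i x).imI = x (i + 1) := rfl
@[simp] lemma imJ_quatBlock : (quatBlock i x).imJ = x (i + 2) := rfl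
@[simp] lemma imK_quatBlock : (quatBlock i x).imK = x (i + 3) := rfl

end QuatBlock

lemma Qd_eq_blocks (d : ℚ) (x : Fin 21 → ℚ) :
    Qd d x = -(x 0 ^ 2) - x 1 ^ 2 + x 2 ^ 2 + x 3 ^ 2 + normSq (quatBlock 4 x)
      + normSq (quatBlock 8 x) + normSq (quatBlock 12 x) + normSq (quatBlock 16 x)
      + d * x 20 ^ 2 := by
  simp [Qd, Finset.sum_filter, Fin.sum_univ_succ, normSq_def', add_assoc]

/-- On the coordinate planes `(0, 2)` and `(1, 3)` this fixes `x 2 - x 0` and multiplies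
`x 2 + x 0` by `n = normSq q`, so `x 2 ^ 2 - x 0 ^ 2 = (x 2 - x 0) * (x 2 + x 0)` is multiplied
by `n`. -/
def quatSimilitude (q : ℍ[ℚ]) : Module.End ℚ (Fin 21 → ℚ) where
  toFun x :=
    let n := normSq q
    let X i := q * quatBlock i x
    ![(n + 1) / 2 * x 0 + (n - 1) / 2 * x 2, (n + 1) / 2 * x 1 + (n - 1) / 2 * x 3,
      (n - 1) / 2 * x 0 + (n + 1) / 2 * x 2, (n - 1) / 2 * x 1 + (n + 1) / 2 * x 3,
      (X 4).re, (X 4).imI, (X 4).imJ, (X 4).imK, (X 8).re, (X 8).imI, (X 8).imJ, (X 8).imK,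
      (X 12).re, (X 12).imI, (X 12).imJ, (X 12).imK, (X 16).re, (X 16).imI, (X 16).imJ, (X 16).imK,
      x 20]
  map_add' x y := by
    simp only [map_add, mul_add, Quaternion.re_add, Quaternion.imI_add, Quaternion.imJ_add,
      Quaternion.imK_add, Pi.add_apply, Matrix.cons_add_cons, Matrix.empty_add_empty]
    ring_nf
  map_smul' c x := by
    simp only [map_smul, mul_smul_comm, Quaternion.re_smul, Quaternion.imI_smul,
      Quaternion.imJ_smul, Quaternion.imK_smul, Pi.smul_apply, Matrix.smul_cons,
      Matrix.smul_empty, smul_eq_mul, RingHom.id_apply]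
    ring_nf

lemma quatBlock_quatSimilitude (q : ℍ[ℚ]) (x : Fin 21 → ℚ) {i : Fin 21}
    (hi : i = 4 ∨ i = 8 ∨ i = 12 ∨ i = 16) :
    quatBlock i (quatSimilitude q x) = q * quatBlock i x := by
  rcases hi with rfl | rfl | rfl | rfl <;> rfl

lemma Qd_quatSimilitude (q : ℍ[ℚ]) (d : ℚ) (x : Fin 21 → ℚ) :
    Qd (normSq q * d) (quatSimilitude q x) = normSq q * Qd d x := by
  simp only [Qd_eq_blocks, quatBlock_quatSimilitude q x, map_mul, true_or, or_true]
  simp only [quatSimilitude, LinearMap.coe_mk, AddHom.coe_mk, Matrix.cons_val_zero,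
    Matrix.cons_val_one, Matrix.cons_val]
  ring

lemma eq_zero_of_hyperbolic_eq_zero {n a b : ℚ} (hn : n ≠ 0)
    (h₁ : (n + 1) / 2 * a + (n - 1) / 2 * b = 0) (h₂ : (n - 1) / 2 * a + (n + 1) / 2 * b = 0) :
    a = 0 ∧ b = 0 := by
  have hsum : a + b = 0 :=
    (mul_eq_zero.mp (by linear_combination h₁ + h₂ : n * (a + b) = 0)).resolve_left hn
  constructor <;> linarith

lemma quatSimilitude_injective {q : ℍ[ℚ]} (hq : q ≠ 0) :
    Function.Injective (quatSimilitude q) := by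
  rw [injective_iff_map_eq_zero]
  intro x hx
  have hcoord : ∀ i, quatSimilitude q x i = 0 := congrFun hx
  have hblock (i : Fin 21) (hi : i = 4 ∨ i = 8 ∨ i = 12 ∨ i = 16) :
      x i = 0 ∧ x (i + 1) = 0 ∧ x (i + 2) = 0 ∧ x (i + 3) = 0 := by
    have hmul : q * quatBlock i x = 0 := by
      rw [← quatBlock_quatSimilitude q x hi, hx, map_zero]
    simpa [Quaternion.ext_iff] using (mul_eq_zero.mp hmul).resolve_left hq
  have hn : normSq q ≠ 0 := normSq_ne_zero.mpr hq
  obtain ⟨h0, h2⟩ := eq_zero_of_hyperbolic_eq_zero hn (hcoord 0) (hcoord 2)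
  obtain ⟨h1, h3⟩ := eq_zero_of_hyperbolic_eq_zero hn (hcoord 1) (hcoord 3)
  obtain ⟨h4, h5, h6, h7⟩ := hblock 4 (by simp)
  obtain ⟨h8, h9, h10, h11⟩ := hblock 8 (by simp)
  obtain ⟨h12, h13, h14, h15⟩ := hblock 12 (by simp)
  obtain ⟨h16, h17, h18, h19⟩ := hblock 16 (by simp)
  ext j
  fin_cases j <;> first | assumption | exact hcoord 20

noncomputable def SOQEquivOfQuaternion {q : ℍ[ℚ]} (hq : q ≠ 0) (d : ℚ) :
    SOQ d ≃* SOQ (normSq q * d) :=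
  specialIsometryGroupEquivOfSimilar (normSq_ne_zero.mpr hq)
    (.ofLinearEquiv (.ofInjectiveEndo _ (quatSimilitude_injective hq))) (Qd_quatSimilitude q d)

lemma exists_normSq_eq_natCast (d : ℕ) : ∃ q : ℍ[ℚ], normSq q = d := by
  obtain ⟨a, b, c, e, h⟩ := Nat.sum_four_squares d
  exact ⟨⟨a, b, c, e⟩, (normSq_def' _).trans (by dsimp; exact_mod_cast h)⟩

theorem SOQ1_iso_SOQd_general (d : ℕ) (hd : 0 < d) :
    Nonempty ((SOQ 1) ≃* (SOQ d)) := by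
  obtain ⟨q, hq⟩ := exists_normSq_eq_natCast d
  have hq0 : q ≠ 0 := by
    rw [← normSq_ne_zero, hq]
    exact_mod_cast hd.ne'
  exact ⟨(SOQEquivOfQuaternion hq0 1).trans (MulEquiv.subgroupCongr (by rw [hq, mul_one]))⟩

/-- For every squarefree positive integer `d`, the groups `SO(Q₁)(ℚ)` and `SO(Q_d)(ℚ)`
are isomorphic as groups. -/
theorem SOQ1_iso_SOQd (d : ℕ) (hd : 0 < d) (hsf : Squarefree d) :
    Nonempty ((SOQ 1) ≃* (SOQ d)) :=
  SOQ1_iso_SOQd_general d hd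
end
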